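/- arXiv:math/9803115 — 3 statements merged into one kernel-verified Lean document; each statement's English description precedes it below -/
import Mathlib

section
/- For every real parameter λ and every point (x,t) ∈ ℝ², the curvature of the connection form ω(λ) = A₁(λ)dx + A₂(λ)dt is concentrated in the (1,2) matrix entry and is proportional to the KdV expression; precisely: D_x A₂(λ) − D_t A₁(λ) + [A₁(λ), A₂(λ)] = (u_t − u·u_x − u_xxx) • E, where E is the 2×2 real matrix with entry 1 in position (1,2) and 0 elsewhere (Matrix.stdBasisMatrix 0 1 1). -/
/-- Partial derivative in the first variable `x` of a function on `ℝ × ℝ`. -/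
noncomputable def pderivX (h : ℝ × ℝ → ℝ) : ℝ × ℝ → ℝ :=
  fun p => fderiv ℝ h p (1, 0)

/-- Partial derivative in the second variable `t` of a function on `ℝ × ℝ`. -/
noncomputable def pderivT (h : ℝ × ℝ → ℝ) : ℝ × ℝ → ℝ :=
  fun p => fderiv ℝ h p (0, 1)

/-- Entrywise partial derivative in `x` of a matrix-valued function. -/
noncomputable def matPderivX (A : ℝ × ℝ → Matrix (Fin 2) (Fin 2) ℝ) :
    ℝ × ℝ → Matrix (Fin 2) (Fin 2) ℝ :=
  fun p => Matrix.of fun i j => pderivX (fun q => A q i j) p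

/-- Entrywise partial derivative in `t` of a matrix-valued function. -/
noncomputable def matPderivT (A : ℝ × ℝ → Matrix (Fin 2) (Fin 2) ℝ) :
    ℝ × ℝ → Matrix (Fin 2) (Fin 2) ℝ :=
  fun p => Matrix.of fun i j => pderivT (fun q => A q i j) p

/-- The matrix `A₁(λ)` of the KdV zero-curvature representation. -/
noncomputable def kdvA1 (u : ℝ × ℝ → ℝ) (l : ℝ) : ℝ × ℝ → Matrix (Fin 2) (Fin 2) ℝ :=
  fun p => !![0, -(l + u p); 1/6, 0]

/-- The matrix `A₂(λ)` of the KdV zero-curvature representation. -/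
noncomputable def kdvA2 (u : ℝ × ℝ → ℝ) (l : ℝ) : ℝ × ℝ → Matrix (Fin 2) (Fin 2) ℝ :=
  fun p =>
    !![-(pderivX u p) / 6,
        -(pderivX (pderivX u) p) - (u p) ^ 2 / 3 + l * u p / 3 + 2 * l ^ 2 / 3;
       u p / 18 - l / 9,
        (pderivX u p) / 6]

lemma contDiff_pderivX {h : ℝ × ℝ → ℝ} (hh : ContDiff ℝ (⊤ : ℕ∞) h) :
    ContDiff ℝ (⊤ : ℕ∞) (pderivX h) :=
  (hh.fderiv_right (by simp)).clm_apply contDiff_const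

section pd
variable (v : ℝ × ℝ) {f g : ℝ × ℝ → ℝ} {p : ℝ × ℝ} {c : ℝ}

lemma pd_const : fderiv ℝ (fun _ : ℝ × ℝ => c) p v = 0 := by simp

lemma pd_neg : fderiv ℝ (fun q => -f q) p v = -(fderiv ℝ f p v) := by
  rw [fderiv_fun_neg]; simp

lemma pd_add (hf : DifferentiableAt ℝ f p) (hg : DifferentiableAt ℝ g p) :
    fderiv ℝ (fun q => f q + g q) p v = fderiv ℝ f p v + fderiv ℝ g p v := by
  rw [fderiv_fun_add hf hg]; simp

lemma pd_sub (hf : DifferentiableAt ℝ f p) (hg : DifferentiableAt ℝ g p) :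
    fderiv ℝ (fun q => f q - g q) p v = fderiv ℝ f p v - fderiv ℝ g p v := by
  rw [fderiv_fun_sub hf hg]; simp

lemma pd_mul (hf : DifferentiableAt ℝ f p) (hg : DifferentiableAt ℝ g p) :
    fderiv ℝ (fun q => f q * g q) p v = f p * fderiv ℝ g p v + g p * fderiv ℝ f p v := by
  rw [fderiv_fun_mul hf hg]; simp

lemma pd_div_const (hf : DifferentiableAt ℝ f p) :
    fderiv ℝ (fun q => f q / c) p v = fderiv ℝ f p v / c := by
  simp only [div_eq_mul_inv]
  rw [fderiv_mul_const hf]; simp [mul_comm]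

lemma pd_const_mul (hf : DifferentiableAt ℝ f p) :
    fderiv ℝ (fun q => c * f q) p v = c * fderiv ℝ f p v := by
  rw [fderiv_const_mul hf]; simp

lemma pd_sq (hf : DifferentiableAt ℝ f p) :
    fderiv ℝ (fun q => f q ^ 2) p v = 2 * f p * fderiv ℝ f p v := by
  have := pd_mul v hf hf
  simp only [← sq] at this
  rw [this]; ring
end pd


/-- The curvature of `ω(λ) = A₁(λ) dx + A₂(λ) dt` is concentrated in the `(1,2)` entry
and is proportional to the KdV expression `u_t − u·u_x − u_xxx`. -/
theorem kdv_curvature_eq (u : ℝ × ℝ → ℝ) (hu : ContDiff ℝ (⊤ : ℕ∞) u) (l : ℝ) (p : ℝ × ℝ) :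
    matPderivX (kdvA2 u l) p - matPderivT (kdvA1 u l) p +
        (kdvA1 u l p * kdvA2 u l p - kdvA2 u l p * kdvA1 u l p) =
      (pderivT u p - u p * pderivX u p - pderivX (pderivX (pderivX u)) p) •
        Matrix.single (0 : Fin 2) (1 : Fin 2) (1 : ℝ) := by
  have unf : ∀ (f : ℝ × ℝ → ℝ) (q : ℝ × ℝ), pderivX f q = fderiv ℝ f q (1, 0) :=
    fun _ _ => rfl
  have unfT : ∀ (f : ℝ × ℝ → ℝ) (q : ℝ × ℝ), pderivT f q = fderiv ℝ f q (0, 1) :=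
    fun _ _ => rfl
  have hU : DifferentiableAt ℝ u p := (hu.differentiable (by simp)) p
  have hWc : ContDiff ℝ (⊤ : ℕ∞) (pderivX u) := contDiff_pderivX hu
  have hW : DifferentiableAt ℝ (pderivX u) p := (hWc.differentiable (by simp)) p
  have hW2c : ContDiff ℝ (⊤ : ℕ∞) (pderivX (pderivX u)) := contDiff_pderivX hWc
  have hW2 : DifferentiableAt ℝ (pderivX (pderivX u)) p := (hW2c.differentiable (by simp)) p
  have e00x : pderivX (fun q => -(pderivX u q) / 6) p = -(pderivX (pderivX u) p) / 6 := by
    rw [unf, pd_div_const _ (by exact hW.neg), pd_neg]; rfl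
  have e11x : pderivX (fun q => (pderivX u q) / 6) p = (pderivX (pderivX u) p) / 6 := by
    rw [unf, pd_div_const _ hW]; rfl
  have e10x : pderivX (fun q => u q / 18 - l / 9) p = pderivX u p / 18 := by
    rw [unf, pd_sub _ (by fun_prop) (differentiableAt_const _), pd_div_const _ hU, pd_const]
    simp only [← unf]
    ring
  have e01x : pderivX
      (fun q => -(pderivX (pderivX u) q) - (u q) ^ 2 / 3 + l * u q / 3 + 2 * l ^ 2 / 3) p
      = -(pderivX (pderivX (pderivX u)) p) - 2 * u p * pderivX u p / 3 + l * pderivX u p / 3 := by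
    have d1 : DifferentiableAt ℝ (fun q => (u q) ^ 2 / 3) p := by fun_prop
    have d2 : DifferentiableAt ℝ (fun q => -(pderivX (pderivX u) q) - (u q) ^ 2 / 3) p :=
      hW2.neg.sub d1
    have d3 : DifferentiableAt ℝ (fun q => l * u q / 3) p := by fun_prop
    rw [unf, pd_add _ (d2.fun_add d3) (differentiableAt_const _), pd_const,
        pd_add _ d2 d3, pd_sub _ (by exact hW2.fun_neg) d1, pd_neg,
        pd_div_const _ (by exact hU.fun_pow 2), pd_sq _ hU,
        pd_div_const _ (by exact hU.const_mul l), pd_const_mul _ hU]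
    simp only [← unf]
    ring
  have e01t : pderivT (fun q => -(l + u q)) p = -(pderivT u p) := by
    rw [unfT, pd_neg, pd_add _ (differentiableAt_const _) hU, pd_const]
    simp only [← unfT]
    ring
  have ec : ∀ c : ℝ, ∀ v : ℝ × ℝ, fderiv ℝ (fun _ : ℝ × ℝ => c) p v = 0 := by
    intro c v; exact pd_const v
  ext i j
  fin_cases i <;> fin_cases j <;>
    simp only [matPderivX, matPderivT, kdvA1, kdvA2, Matrix.sub_apply, Matrix.add_apply,
      Matrix.mul_apply, Fin.sum_univ_two, Matrix.of_apply, Fin.mk_zero, Fin.mk_one,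
      Matrix.cons_val', Matrix.cons_val_zero, Matrix.cons_val_one, Matrix.head_cons,
      Matrix.head_fin_const, Matrix.empty_val', Matrix.cons_val_fin_one,
      Matrix.smul_apply, Matrix.single, smul_eq_mul]
  · rw [e00x]
    simp only [pderivT, ec]
    norm_num
    ring
  · rw [e01x, e01t]
    norm_num
    ring
  · rw [e10x]
    simp only [pderivT, ec]
    norm_num
    ring
  · rw [e11x]
    simp only [pderivT, ec]
    norm_num
    ring
end

section
/- The following are equivalent: (i) u satisfies the KdV equation u_t = u·u_x + u_xxx at every point of ℝ²; (ii) for every λ ∈ ℝ the zero-curvature (horizontal Maurer–Cartan) equation D_x A₂(λ) − D_t A₁(λ) + [A₁(λ), A₂(λ)] = 0 holds at every point of ℝ²; (iii) for some λ ∈ ℝ the equation D_x A₂(λ) − D_t A₁(λ) + [A₁(λ), A₂(λ)] = 0 holds at every point of ℝ². In other words, ω(λ) = A₁(λ)dx + A₂(λ)dt is a one-parameter family of sl₂(ℝ)-valued zero-curvature representations of the KdV equation. -/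
lemma contDiff_pderivX_s1 {u : ℝ × ℝ → ℝ} (hu : ContDiff ℝ (⊤ : ℕ∞) u) :
    ContDiff ℝ (⊤ : ℕ∞) (pderivX u) :=
  (hu.fderiv_right (m := (⊤ : ℕ∞)) (by simp)).clm_apply contDiff_const

lemma pderivX_add {f g : ℝ × ℝ → ℝ} {p : ℝ × ℝ} (hf : DifferentiableAt ℝ f p)
    (hg : DifferentiableAt ℝ g p) :
    pderivX (fun q => f q + g q) p = pderivX f p + pderivX g p := by
  simp [pderivX, fderiv_fun_add hf hg]

lemma pderivX_neg {f : ℝ × ℝ → ℝ} {p : ℝ × ℝ} :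
    pderivX (fun q => -f q) p = -pderivX f p := by
  simp [pderivX, fderiv_neg]

lemma pderivX_sub {f g : ℝ × ℝ → ℝ} {p : ℝ × ℝ} (hf : DifferentiableAt ℝ f p)
    (hg : DifferentiableAt ℝ g p) :
    pderivX (fun q => f q - g q) p = pderivX f p - pderivX g p := by
  simp [pderivX, fderiv_fun_sub hf hg]

lemma pderivX_mul {f g : ℝ × ℝ → ℝ} {p : ℝ × ℝ} (hf : DifferentiableAt ℝ f p)
    (hg : DifferentiableAt ℝ g p) :
    pderivX (fun q => f q * g q) p = pderivX f p * g p + f p * pderivX g p := by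
  simp [pderivX, fderiv_fun_mul hf hg]
  ring

lemma pderivX_div_const {f : ℝ × ℝ → ℝ} {p : ℝ × ℝ} (hf : DifferentiableAt ℝ f p) (c : ℝ) :
    pderivX (fun q => f q / c) p = pderivX f p / c := by
  simp [pderivX, div_eq_mul_inv, fderiv_mul_const hf, mul_comm]

lemma pderivX_const_mul {f : ℝ × ℝ → ℝ} {p : ℝ × ℝ} (hf : DifferentiableAt ℝ f p) (c : ℝ) :
    pderivX (fun q => c * f q) p = c * pderivX f p := by
  simp [pderivX, fderiv_const_mul hf]

lemma kdv_zc_key (u : ℝ × ℝ → ℝ) (hu : ContDiff ℝ (⊤ : ℕ∞) u) (l : ℝ) (p : ℝ × ℝ) :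
    matPderivX (kdvA2 u l) p - matPderivT (kdvA1 u l) p +
        (kdvA1 u l p * kdvA2 u l p - kdvA2 u l p * kdvA1 u l p) =
      !![0, pderivT u p -
            (u p * pderivX u p + pderivX (pderivX (pderivX u)) p); 0, 0] := by
  have d1 : Differentiable ℝ u := hu.differentiable (by simp)
  have c2 : ContDiff ℝ (⊤ : ℕ∞) (pderivX u) := contDiff_pderivX_s1 hu
  have d2 : Differentiable ℝ (pderivX u) := c2.differentiable (by simp)
  have d3 : Differentiable ℝ (pderivX (pderivX u)) :=
    (contDiff_pderivX_s1 c2).differentiable (by simp)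
  have hsq : pderivX (fun q => (u q) ^ 2) p = 2 * u p * pderivX u p := by
    have h : (fun q => (u q) ^ 2) = fun q => u q * u q := by funext q; ring
    rw [h, pderivX_mul (d1 p) (d1 p)]; ring
  have e11 : pderivX (fun q => -(pderivX u q) / 6) p =
      -(pderivX (pderivX u) p) / 6 := by
    rw [pderivX_div_const (by fun_prop) 6, pderivX_neg]
  have e22 : pderivX (fun q => pderivX u q / 6) p = pderivX (pderivX u) p / 6 :=
    pderivX_div_const (d2 p) 6
  have e21 : pderivX (fun q => u q / 18 - l / 9) p = pderivX u p / 18 := by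
    rw [pderivX_sub (by fun_prop) (by fun_prop), pderivX_div_const (d1 p) 18]
    have : pderivX (fun _ : ℝ × ℝ => l / 9) p = 0 := by simp [pderivX]
    rw [this, sub_zero]
  have e12 : pderivX (fun q =>
        -(pderivX (pderivX u) q) - (u q) ^ 2 / 3 + l * u q / 3 + 2 * l ^ 2 / 3) p =
      -(pderivX (pderivX (pderivX u)) p) - (2 * u p * pderivX u p) / 3 +
        l * pderivX u p / 3 := by
    rw [pderivX_add (by fun_prop) (by fun_prop)]
    have hc : pderivX (fun _ : ℝ × ℝ => 2 * l ^ 2 / 3) p = 0 := by simp [pderivX]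
    rw [hc, add_zero, pderivX_add (by fun_prop) (by fun_prop),
      pderivX_sub (by fun_prop) (by fun_prop), pderivX_neg,
      pderivX_div_const (by fun_prop) 3, hsq]
    have hl : pderivX (fun q => l * u q / 3) p = l * pderivX u p / 3 := by
      rw [pderivX_div_const (by fun_prop) 3, pderivX_const_mul (d1 p)]
    rw [hl]
  have t12 : pderivT (fun q => -(l + u q)) p = -(pderivT u p) := by
    have h : (fun q => -(l + u q)) = fun q => -u q + -l := funext fun q => by ring
    rw [h]
    simp [pderivT, fderiv_add_const, fderiv_fun_neg]
  ext i j
  fin_cases i <;> fin_cases j <;>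
    simp only [matPderivX, matPderivT, kdvA1, kdvA2, Matrix.of_apply,
      Matrix.cons_val', Matrix.cons_val_zero, Matrix.cons_val_one,
      Matrix.head_cons, Matrix.head_fin_const, Matrix.empty_val',
      Matrix.cons_val_fin_one, Matrix.sub_apply, Matrix.add_apply,
      Matrix.mul_apply, Fin.sum_univ_two, Fin.isValue, Fin.mk_zero, Fin.mk_one]
  · rw [e11]
    have : pderivT (fun _ : ℝ × ℝ => (0 : ℝ)) p = 0 := by simp [pderivT]
    rw [this]; ring
  · rw [e12, t12]; ring
  · rw [e21]
    have : pderivT (fun _ : ℝ × ℝ => (1 : ℝ) / 6) p = 0 := by simp [pderivT]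
    rw [this]; ring
  · rw [e22]
    have : pderivT (fun _ : ℝ × ℝ => (0 : ℝ)) p = 0 := by simp [pderivT]
    rw [this]; ring

/-- `ω(λ) = A₁(λ) dx + A₂(λ) dt` is a one-parameter family of zero-curvature
representations of the KdV equation: the KdV equation holds everywhere iff the
zero-curvature (horizontal Maurer–Cartan) equation holds everywhere for every `λ`,
iff it holds everywhere for some `λ`. -/
theorem kdv_zero_curvature_tfae (u : ℝ × ℝ → ℝ) (hu : ContDiff ℝ (⊤ : ℕ∞) u) :
    List.TFAE
      [ ∀ p : ℝ × ℝ, pderivT u p = u p * pderivX u p + pderivX (pderivX (pderivX u)) p,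
        ∀ l : ℝ, ∀ p : ℝ × ℝ,
          matPderivX (kdvA2 u l) p - matPderivT (kdvA1 u l) p +
            (kdvA1 u l p * kdvA2 u l p - kdvA2 u l p * kdvA1 u l p) = 0,
        ∃ l : ℝ, ∀ p : ℝ × ℝ,
          matPderivX (kdvA2 u l) p - matPderivT (kdvA1 u l) p +
            (kdvA1 u l p * kdvA2 u l p - kdvA2 u l p * kdvA1 u l p) = 0 ] := by
  tfae_have 1 → 2 := by
    intro h l p
    have h0 : pderivT u p - (u p * pderivX u p + pderivX (pderivX (pderivX u)) p) = 0 := by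
      rw [h p]; ring
    rw [kdv_zc_key u hu l p, h0]
    ext i j; fin_cases i <;> fin_cases j <;> simp
  tfae_have 2 → 3 := fun h => ⟨0, h 0⟩
  tfae_have 3 → 1 := by
    rintro ⟨l, h⟩ p
    have h' := (kdv_zc_key u hu l p) ▸ h p
    have h01 := Matrix.ext_iff.2 h' 0 1
    simp at h01
    linarith [sub_eq_zero.1 h01]
  tfae_finish
end

section
/- For every nonzero linear functional f ∈ V*, the kernel of the contraction C_f equals its range: ker C_f = range C_f in Λ(V). (Since C_f ∘ C_f = 0 this is the exactness of the contraction complex; it corresponds to the paper's identification (ker A_{n−p})^⊥ = im A_{n−p}^* for the adjoint of exterior multiplication.) -/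
/-- Left multiplication by `ι v` in the exterior algebra. -/
noncomputable def wedgeMul (K V : Type*) [Field K] [AddCommGroup V] [Module K V] (v : V) :
    ExteriorAlgebra K V →ₗ[K] ExteriorAlgebra K V :=
  LinearMap.mulLeft K (ExteriorAlgebra.ι K v)

/-- Left contraction (interior product) by a linear functional `f` on the exterior
algebra, realized as `CliffordAlgebra.contractLeft` for the zero quadratic form. -/
noncomputable def contraction (K V : Type*) [Field K] [AddCommGroup V] [Module K V]
    (f : Module.Dual K V) : ExteriorAlgebra K V →ₗ[K] ExteriorAlgebra K V :=
  CliffordAlgebra.contractLeft (Q := (0 : QuadraticForm K V)) f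

/-- For every nonzero linear functional `f`, the contraction complex on the exterior
algebra is exact: the kernel of `C_f` equals its range. -/
theorem contraction_ker_eq_range (K V : Type*) [Field K] [AddCommGroup V] [Module K V]
    (f : Module.Dual K V) (hf : f ≠ 0) :
    LinearMap.ker (contraction K V f) = LinearMap.range (contraction K V f) := by
  obtain ⟨v, hv⟩ : ∃ v, f v ≠ 0 := by
    by_contra h
    push_neg at h
    exact hf (LinearMap.ext fun v => h v)
  apply le_antisymm
  · intro x hx
    rw [LinearMap.mem_ker] at hx
    refine ⟨(f v)⁻¹ • (ExteriorAlgebra.ι K v * x), ?_⟩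
    have hx' : CliffordAlgebra.contractLeft (Q := (0 : QuadraticForm K V)) f x = 0 := hx
    simp only [contraction, map_smul, CliffordAlgebra.contractLeft_ι_mul, hx', mul_zero,
      sub_zero, smul_smul, inv_mul_cancel₀ hv, one_smul]
  · rintro _ ⟨y, rfl⟩
    rw [LinearMap.mem_ker]
    exact CliffordAlgebra.contractLeft_contractLeft _ _
end
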